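/- arXiv:2505.00477 — 2 statements merged into one kernel-verified Lean document; each statement's English description precedes it below -/
import Mathlib

section
/- Let F_r (r ≥ 3) be freely generated by the disjoint union X ⊔ Y of two nonempty sets, and let w = w_X w_Y where w_X lies in the subgroup generated by X and w_Y lies in the subgroup generated by Y. Then w is not primitivity-blocking: some cyclically reduced primitive element of F_r contains w as a subword. -/
open FreeGroup

/-- The free group of rank `r` on the basis `Fin r`. -/
abbrev F (r : ℕ) := FreeGroup (Fin r)

/-- `v` is a subword of `u`: the reduced word of `v` occurs as a contiguous
block of the reduced word of `u`. -/
def Subword {α : Type*} [DecidableEq α] (v u : FreeGroup α) : Prop :=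
  v.toWord <:+: u.toWord

/-- `u` is cyclically reduced: the first letter of its reduced word is not the
inverse of its last letter. -/
def CyclRed {α : Type*} [DecidableEq α] (u : FreeGroup α) : Prop :=
  ∀ a ∈ u.toWord.head?, ∀ b ∈ u.toWord.getLast?, a ≠ (b.1, !b.2)

/-- `u` is primitive: some automorphism sends a generator to `u`
(equivalently, `u` belongs to a basis). -/
def IsPrimitive {α : Type*} [DecidableEq α] (u : FreeGroup α) : Prop :=
  ∃ (φ : FreeGroup α ≃* FreeGroup α) (i : α), φ (FreeGroup.of i) = u

/-- `v` is primitivity-blocking: it is not a subword of any cyclically reduced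
primitive element. -/
def PrimitivityBlocking {α : Type*} [DecidableEq α] (v : FreeGroup α) : Prop :=
  ∀ u : FreeGroup α, IsPrimitive u → CyclRed u → ¬ Subword v u

/-- Reduced word length. -/
def len {α : Type*} [DecidableEq α] (u : FreeGroup α) : ℕ := u.toWord.length

/-- `v` is `w`-orbit-blocking: for every automorphism `φ`, `v` is not a subword
of the cyclic reduction of `φ w` (i.e. of any cyclically reduced element
conjugate to `φ w`). -/
def OrbitBlocking {α : Type*} [DecidableEq α] (w v : FreeGroup α) : Prop :=
  ∀ (φ : FreeGroup α ≃* FreeGroup α) (c : FreeGroup α),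
    CyclRed c → IsConj c (φ w) → ¬ Subword v c

/-- A word is slender if some generator occurs (with exponent `±1`) at most
once in its reduced word. -/
def Slender {α : Type*} [DecidableEq α] (w : FreeGroup α) : Prop :=
  ∃ x : α, (w.toWord.countP fun p => decide (p.1 = x)) ≤ 1

/-!
Write `S` for the letters of `X`, so that `w_Y` and every `y ∈ Y` lie in `⟨Sᶜ⟩`. Choose `y ∈ Y`
different from the last letter of `w_Y` (possible once `|Y| ≥ 2`) and take
`p = w_X · w_Y y w_Y⁻¹`. It is the image of the primitive element `w_X y` (a transvection of
`y`, since `w_X` does not involve `y`) under the automorphism conjugating every generator of `Y`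
by `w_Y`, which fixes `w_X` and `w_Y`. Its reduced word is the concatenation of the reduced words
of `w_X`, `w_Y`, `y` and `w_Y⁻¹`, which starts with a letter of `X` and ends with a letter of `Y`,
so `p` is cyclically reduced. If `w_X = 1`, any `x ∈ X` plays the role of `w_X`. If `|Y| = 1`,
then `|X| ≥ 2` and we apply this with the roles of `X` and `Y` exchanged to
`(w_X w_Y)⁻¹ = w_Y⁻¹ w_X⁻¹`, and invert the result.
-/

namespace FreeGroup

variable {α : Type*} {S : Set α}

theorem IsReduced.append_singleton {L : List (α × Bool)} (h : IsReduced L) {a : α × Bool}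
    (ha : ∀ b ∈ L.getLast?, b.1 ≠ a.1) : IsReduced (L ++ [a]) :=
  List.isChain_append.2 ⟨h, .singleton a, fun b hb a' ha' => by
    obtain rfl : a = a' := by simpa using ha'
    exact fun h => absurd h (ha b hb)⟩

theorem IsReduced.append_of_fst_mem_of_fst_notMem {L₁ L₂ : List (α × Bool)} (h₁ : IsReduced L₁)
    (h₂ : IsReduced L₂) (hL₁ : ∀ p ∈ L₁, p.1 ∈ S) (hL₂ : ∀ p ∈ L₂, p.1 ∉ S) :
    IsReduced (L₁ ++ L₂) :=
  List.isChain_append.2 ⟨h₁, h₂, fun a ha b hb hab => absurd (hab ▸ hL₁ a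
    (List.mem_of_getLast? ha)) (hL₂ b (List.mem_of_mem_head? hb))⟩

theorem map_eq_of_mem_closure {G : Type*} [Group G] {f g : FreeGroup α →* G}
    (h : ∀ a ∈ S, f (of a) = g (of a)) {w : FreeGroup α}
    (hw : w ∈ Subgroup.closure (of '' S)) : f w = g w :=
  MonoidHom.eqOn_closure (by rintro _ ⟨a, ha, rfl⟩; exact h a ha) hw

section Reduce

variable [DecidableEq α]

theorem IsReduced.invRev {L : List (α × Bool)} (h : IsReduced L) : IsReduced (invRev L) :=
  isReduced_iff_reduce_eq.2 (by rw [reduce_invRev, h.reduce_eq])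

theorem fst_mem_of_mem_toWord_of_mem_closure {w : FreeGroup α}
    (hw : w ∈ Subgroup.closure (of '' S)) {p : α × Bool} (hp : p ∈ w.toWord) : p.1 ∈ S := by
  induction hw using Subgroup.closure_induction generalizing p with
  | mem _ hu =>
    obtain ⟨a, ha, rfl⟩ := hu
    rw [toWord_of, List.mem_singleton] at hp
    exact hp ▸ ha
  | one => simp at hp
  | mul x y _ _ ihx ihy =>
    rcases List.mem_append.1 ((toWord_mul_sublist x y).subset hp) with h | h
    exacts [ihx h, ihy h]
  | inv x _ ih =>
    rw [toWord_inv] at hp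
    obtain ⟨q, hq, rfl⟩ := List.mem_map.1 (List.mem_reverse.1 hp)
    exact ih (p := q) hq

theorem toWord_mul_of_mem_closure {u v : FreeGroup α} (hu : u ∈ Subgroup.closure (of '' S))
    (hv : v ∈ Subgroup.closure (of '' Sᶜ)) : (u * v).toWord = u.toWord ++ v.toWord := by
  rw [toWord_mul, (isReduced_toWord.append_of_fst_mem_of_fst_notMem isReduced_toWord
    (fun _ => fst_mem_of_mem_toWord_of_mem_closure hu)
    (fun _ => fst_mem_of_mem_toWord_of_mem_closure hv)).reduce_eq]

theorem toWord_conj_of {v : FreeGroup α} {y : α} (hlast : ∀ b ∈ v.toWord.getLast?, b.1 ≠ y) :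
    (v * of y * v⁻¹).toWord = v.toWord ++ [(y, true)] ++ invRev v.toWord := by
  have hvy (t : Bool) : IsReduced (v.toWord ++ [(y, t)]) :=
    isReduced_toWord.append_singleton hlast
  have hyv : IsReduced ([(y, true)] ++ invRev v.toWord) := by
    simpa [invRev] using (hvy false).invRev
  rw [toWord_mul, toWord_mul, toWord_of, toWord_inv,
    (hvy true).reduce_eq, ((hvy true).append_overlap hyv (List.cons_ne_nil _ _)).reduce_eq]

end Reduce

open Classical in
noncomputable def partialConj (T : Set α) (c : FreeGroup α) : FreeGroup α →* FreeGroup α :=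
  lift (T.piecewise (fun a => c * of a * c⁻¹) of)

section PartialConj

variable {T : Set α} {c w : FreeGroup α} {a : α}

theorem partialConj_of_of_mem (ha : a ∈ T) : partialConj T c (of a) = c * of a * c⁻¹ := by
  simp [partialConj, ha]

theorem partialConj_of_of_notMem (ha : a ∉ T) : partialConj T c (of a) = of a := by
  simp [partialConj, ha]

theorem partialConj_of_mem_closure (hw : w ∈ Subgroup.closure (of '' T)) :
    partialConj T c w = c * w * c⁻¹ :=
  map_eq_of_mem_closure (g := (MulAut.conj c).toMonoidHom)
    (fun _ ha => partialConj_of_of_mem ha) hw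

theorem partialConj_of_mem_closure_compl (hw : w ∈ Subgroup.closure (of '' Tᶜ)) :
    partialConj T c w = w :=
  map_eq_of_mem_closure (g := MonoidHom.id _) (fun _ ha => partialConj_of_of_notMem ha) hw

theorem partialConj_inv_comp (hc : c ∈ Subgroup.closure (of '' T)) :
    (partialConj T c⁻¹).comp (partialConj T c) = MonoidHom.id _ := by
  ext a
  by_cases ha : a ∈ T
  · simp only [MonoidHom.comp_apply, partialConj_of_of_mem ha, _root_.map_mul, _root_.map_inv,
      partialConj_of_mem_closure hc, MonoidHom.id_apply]
    group
  · simp [partialConj_of_of_notMem ha]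

/-- For `c ∈ ⟨T⟩` the partial conjugation fixes `c`, hence is undone by `partialConj T c⁻¹`. -/
noncomputable def partialConjEquiv (T : Set α) (c : FreeGroup α)
    (hc : c ∈ Subgroup.closure (of '' T)) : FreeGroup α ≃* FreeGroup α :=
  (partialConj T c).toMulEquiv (partialConj T c⁻¹) (partialConj_inv_comp hc)
    (by simpa using partialConj_inv_comp (inv_mem hc))

end PartialConj

section Transvection

variable [DecidableEq α] {a : α} {c : FreeGroup α}

def transvection (a : α) (c : FreeGroup α) : FreeGroup α →* FreeGroup α :=
  lift (Function.update of a (c * of a))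

theorem transvection_of_self : transvection a c (of a) = c * of a := by
  simp [transvection]

theorem transvection_of_mem_closure {w : FreeGroup α}
    (hw : w ∈ Subgroup.closure (of '' {a}ᶜ)) : transvection a c w = w :=
  map_eq_of_mem_closure (g := MonoidHom.id _)
    (fun _ hb => by simp [transvection, Function.update_of_ne hb]) hw

theorem transvection_inv_comp (hc : c ∈ Subgroup.closure (of '' {a}ᶜ)) :
    (transvection a c⁻¹).comp (transvection a c) = MonoidHom.id _ := by
  ext b
  rcases eq_or_ne b a with rfl | hb
  · rw [MonoidHom.comp_apply, transvection_of_self, _root_.map_mul,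
      transvection_of_mem_closure hc, transvection_of_self, mul_inv_cancel_left]
    rfl
  · simp [transvection, Function.update_of_ne hb]

end Transvection

end FreeGroup

section

variable {α : Type*} [DecidableEq α]

theorem IsPrimitive.map {u : FreeGroup α} (hu : IsPrimitive u) (φ : FreeGroup α ≃* FreeGroup α) :
    IsPrimitive (φ u) :=
  let ⟨ψ, i, h⟩ := hu
  ⟨ψ.trans φ, i, by rw [MulEquiv.trans_apply, h]⟩

theorem isPrimitive_mul_of {a : α} {c : FreeGroup α} (hc : c ∈ Subgroup.closure (of '' {a}ᶜ)) :
    IsPrimitive (c * of a) :=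
  ⟨(transvection a c).toMulEquiv (transvection a c⁻¹) (transvection_inv_comp hc)
      (by simpa using transvection_inv_comp (inv_mem hc)), a, transvection_of_self⟩

theorem IsPrimitive.inv {u : FreeGroup α} (hu : IsPrimitive u) : IsPrimitive u⁻¹ := by
  let σ : FreeGroup α →* FreeGroup α := lift fun a => (of a)⁻¹
  have hσ : σ.comp σ = MonoidHom.id _ := by ext; simp [σ]
  obtain ⟨φ, i, rfl⟩ := hu
  exact ⟨(σ.toMulEquiv σ hσ hσ).trans φ, i, by simp [σ]⟩

theorem CyclRed.inv {u : FreeGroup α} (hu : CyclRed u) : CyclRed u⁻¹ := by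
  intro a ha b hb
  simp only [toWord_inv, invRev, List.head?_reverse, List.getLast?_map, List.getLast?_reverse,
    List.head?_map, Option.mem_def, Option.map_eq_some_iff] at ha hb
  obtain ⟨b', hb', rfl⟩ := ha
  obtain ⟨a', ha', rfl⟩ := hb
  have := hu a' ha' b' hb'
  contrapose! this
  simp_all

theorem Subword.inv {v u : FreeGroup α} (h : Subword v u) : Subword v⁻¹ u⁻¹ := by
  obtain ⟨s, t, hst⟩ := h
  exact ⟨invRev t, invRev s, by simp [toWord_inv, ← hst, invRev_append, List.append_assoc]⟩

theorem cyclRed_mul_of_mem_closure {S : Set α} {u c : FreeGroup α}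
    (hu : u ∈ Subgroup.closure (of '' S)) (hc : c ∈ Subgroup.closure (of '' Sᶜ))
    (hu1 : u ≠ 1) (hc1 : c ≠ 1) : CyclRed (u * c) := by
  intro a ha b hb hab
  rw [toWord_mul_of_mem_closure hu hc] at ha hb
  rw [List.head?_append_of_ne_nil _ (toWord_eq_nil_iff.not.2 hu1)] at ha
  rw [List.getLast?_append_of_ne_nil _ (toWord_eq_nil_iff.not.2 hc1)] at hb
  have ha' := fst_mem_of_mem_toWord_of_mem_closure hu (List.mem_of_mem_head? ha)
  exact fst_mem_of_mem_toWord_of_mem_closure hc (List.mem_of_getLast? hb) (by simpa [hab] using ha')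

theorem isPrimitive_mul_conj_of {S : Set α} {u v : FreeGroup α} {y : α}
    (hu : u ∈ Subgroup.closure (of '' S)) (hv : v ∈ Subgroup.closure (of '' Sᶜ)) (hy : y ∉ S) :
    IsPrimitive (u * (v * of y * v⁻¹)) := by
  have hu' : u ∈ Subgroup.closure (of '' {y}ᶜ) :=
    Subgroup.closure_mono (Set.image_mono (Set.subset_compl_singleton_iff.2 hy)) hu
  have hfix : partialConj Sᶜ v u = u :=
    partialConj_of_mem_closure_compl (by rwa [compl_compl])
  have := (isPrimitive_mul_of hu').map (partialConjEquiv Sᶜ v hv)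
  rwa [partialConjEquiv, MonoidHom.toMulEquiv_apply, _root_.map_mul, hfix,
    partialConj_of_of_mem hy] at this

theorem exists_isPrimitive_cyclRed_subword_mul {S : Set α} (hS : S.Nonempty)
    (hSc : Sᶜ.Nontrivial) {u v : FreeGroup α} (hu : u ∈ Subgroup.closure (of '' S))
    (hv : v ∈ Subgroup.closure (of '' Sᶜ)) :
    ∃ p : FreeGroup α, IsPrimitive p ∧ CyclRed p ∧ Subword (u * v) p := by
  obtain ⟨y, hy, hlast⟩ : ∃ y ∉ S, ∀ b ∈ v.toWord.getLast?, b.1 ≠ y := by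
    cases v.toWord.getLast? with
    | none => exact hSc.nonempty.imp fun y hy => ⟨hy, by simp⟩
    | some b => simpa [eq_comm] using hSc.exists_ne b.1
  set c := v * of y * v⁻¹
  have hc : c ∈ Subgroup.closure (of '' Sᶜ) :=
    mul_mem (mul_mem hv (Subgroup.subset_closure ⟨y, hy, rfl⟩)) (inv_mem hv)
  have hc1 : c ≠ 1 := by simp [c]
  have hcw : c.toWord = v.toWord ++ [(y, true)] ++ invRev v.toWord := toWord_conj_of hlast
  rcases eq_or_ne u 1 with rfl | hu1
  · obtain ⟨x, hx⟩ := hS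
    have hx' : of x ∈ Subgroup.closure (of '' S) := Subgroup.subset_closure ⟨x, hx, rfl⟩
    refine ⟨of x * c, isPrimitive_mul_conj_of hx' hv hy,
      cyclRed_mul_of_mem_closure hx' hc (of_ne_one x) hc1, ?_⟩
    rw [Subword, one_mul, toWord_mul_of_mem_closure hx' hc, hcw]
    exact ⟨(of x).toWord, [(y, true)] ++ invRev v.toWord, by simp⟩
  · refine ⟨u * c, isPrimitive_mul_conj_of hu hv hy,
      cyclRed_mul_of_mem_closure hu hc hu1 hc1, ?_⟩
    rw [Subword, toWord_mul_of_mem_closure hu hv, toWord_mul_of_mem_closure hu hc, hcw]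
    exact ⟨[], [(y, true)] ++ invRev v.toWord, by simp⟩

end

/-- a product `w_X w_Y` with factors from complementary free
factors is not primitivity-blocking. -/
theorem stmt5 {X Y : Type*} [DecidableEq X] [DecidableEq Y] [Fintype X] [Fintype Y]
    [Nonempty X] [Nonempty Y] (hr : 3 ≤ Fintype.card X + Fintype.card Y)
    (wX wY : FreeGroup (X ⊕ Y))
    (hwX : wX ∈ Subgroup.closure (Set.range fun x : X => FreeGroup.of (Sum.inl x : X ⊕ Y)))
    (hwY : wY ∈ Subgroup.closure (Set.range fun y : Y => FreeGroup.of (Sum.inr y : X ⊕ Y))) :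
    ∃ p : FreeGroup (X ⊕ Y), IsPrimitive p ∧ CyclRed p ∧ Subword (wX * wY) p := by
  rw [Set.range_comp' of] at hwX hwY
  by_cases hY : 1 < Fintype.card Y
  · have := Fintype.one_lt_card_iff_nontrivial.1 hY
    refine exists_isPrimitive_cyclRed_subword_mul (Set.range_nonempty _) ?_ hwX
      (by rwa [Set.compl_range_inl])
    simpa using Set.nontrivial_univ.image (Sum.inr_injective (α := X) (β := Y))
  · have := Fintype.one_lt_card_iff_nontrivial.1 (by omega : 1 < Fintype.card X)
    obtain ⟨p, hp, hcr, hsub⟩ := exists_isPrimitive_cyclRed_subword_mul (S := Set.range Sum.inr)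
      (Set.range_nonempty _)
      (by simpa using Set.nontrivial_univ.image (Sum.inl_injective (α := X) (β := Y)))
      (inv_mem hwY) (by rwa [Set.compl_range_inr, inv_mem_iff])
    exact ⟨p⁻¹, hp.inv, hcr.inv, by simpa using hsub.inv⟩
end

section
/- Let φ be a conjugacy-length-minimal automorphism of F_r with r ≥ 3 (no simultaneous conjugation shortens the total length of the images of the generators), and let w be a slender word, i.e., some generator x occurs (with exponent ±1) at most once in w. Then φ(w) does not contain any primitivity-blocking subword. -/
open FreeGroup

/-!
Let `x` be a generator occurring at most once in `w` and let `K = φ ⟨α ∖ {x}⟩`. If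
`w = C x^{±1} D` with `C`, `D` free of `x`, then `w * E` is primitive for every `E` free of `x`,
since a Nielsen transvection sends `x` to it. Choosing `E` so that `φ w * φ E` is reduced and
cyclically reduced as written exhibits `φ w` as a prefix of a cyclically reduced primitive word, so
`φ w` contains no primitivity-blocking subword. If `x` does not occur in `w`, the same choice first
replaces `w` by `w * E' * x`, whose image still begins with `φ w`.

Such an `E` exists because for any letters `a`, `b` some nontrivial element of `K` neither begins
with `a` nor ends with `b⁻¹`. Conjugacy-length-minimality enters only here: conjugating by a letter
`c` shortens by two every image `φ xⱼ` that begins with `c` and ends with `c⁻¹`, so for `r ≥ 3` some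
`φ xⱼ` with `j ≠ x` is not of this form. If every nontrivial element of `K` began with `a` or ended
with `b⁻¹`, a product of two of the images `φ xⱼ` gives a contradiction when `a ≠ b`, and a
Nielsen descent on non-commuting pairs does when `a = b`.
-/

theorem List.exists_common_prefix {γ : Type*} :
    ∀ A B : List γ, ∃ S A' B', A = S ++ A' ∧ B = S ++ B' ∧
      ∀ a ∈ A'.head?, ∀ b ∈ B'.head?, a ≠ b
  | a :: A, b :: B => by
    by_cases hab : a = b
    · obtain ⟨S, A', B', rfl, rfl, h⟩ := exists_common_prefix A B
      exact ⟨a :: S, A', B', rfl, by rw [hab]; rfl, h⟩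
    · exact ⟨[], a :: A, b :: B, rfl, rfl, by simpa using hab⟩
  | [], B => ⟨[], [], B, rfl, rfl, by simp⟩
  | A, [] => ⟨[], A, [], rfl, rfl, by simp⟩

theorem List.forall_or_exists_split_of_countP_le_one {γ : Type*} {P : γ → Bool} {L : List γ}
    (h : L.countP P ≤ 1) :
    (∀ a ∈ L, ¬P a) ∨
      ∃ L₁ a L₂, L = L₁ ++ a :: L₂ ∧ P a ∧ (∀ b ∈ L₁, ¬P b) ∧ ∀ b ∈ L₂, ¬P b := by
  by_cases hL : ∃ a ∈ L, P a
  · obtain ⟨a, ha, hPa⟩ := hL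
    obtain ⟨L₁, L₂, rfl⟩ := List.append_of_mem ha
    rw [List.countP_append, List.countP_cons_of_pos hPa] at h
    exact Or.inr ⟨L₁, a, L₂, rfl, hPa, List.countP_eq_zero.1 (by omega),
      List.countP_eq_zero.1 (by omega)⟩
  · exact Or.inl fun a ha hPa => hL ⟨a, ha, hPa⟩

namespace FreeGroup

variable {α : Type*} [DecidableEq α]

theorem head?_toWord_inv (g : FreeGroup α) :
    g⁻¹.toWord.head? = g.toWord.getLast?.map fun a => (a.1, !a.2) := by
  rw [toWord_inv, invRev, List.head?_reverse, List.getLast?_map]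

theorem head?_toWord_inv_of_eq_append {g : FreeGroup α} {S P : List (α × Bool)}
    (hg : g.toWord = S ++ P) (hP : P ≠ []) : g⁻¹.toWord.head? = (invRev P).head? := by
  rw [toWord_inv, hg, invRev_append, List.head?_append_of_ne_nil]
  simpa [invRev] using hP

theorem toWord_mk_of_infix {L : List (α × Bool)} {g : FreeGroup α} (h : L <:+: g.toWord) :
    (mk L).toWord = L := by
  rw [toWord_mk, (isReduced_toWord.infix h).reduce_eq]

/-- `g * h` is reduced as written: the inverse of the last letter of `g` is not the first letter
of `h`. -/
def NoCancel (g h : FreeGroup α) : Prop :=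
  ∀ a ∈ g⁻¹.toWord.head?, ∀ b ∈ h.toWord.head?, a ≠ b

theorem toWord_mul_of_noCancel {g h : FreeGroup α} (H : NoCancel g h) :
    (g * h).toWord = g.toWord ++ h.toWord := by
  rw [toWord_mul, IsReduced.reduce_eq]
  refine List.isChain_append.2 ⟨isReduced_toWord, isReduced_toWord, fun a ha b hb hab => ?_⟩
  by_contra hne
  refine H (a.1, !a.2) ?_ b hb (Prod.ext hab (Bool.eq_not.2 (Ne.symm hne)).symm)
  rw [head?_toWord_inv, Option.mem_def.1 ha]
  rfl

theorem NoCancel.inv {g h : FreeGroup α} (H : NoCancel g h) : NoCancel h⁻¹ g⁻¹ := by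
  intro a ha b hb
  rw [inv_inv] at ha
  exact (H b hb a ha).symm

theorem head?_mul_of_noCancel {g h : FreeGroup α} (H : NoCancel g h) (hg : g ≠ 1) :
    (g * h).toWord.head? = g.toWord.head? := by
  rw [toWord_mul_of_noCancel H, List.head?_append_of_ne_nil _ (mt toWord_eq_nil_iff.1 hg)]

theorem NoCancel.mul_right {g h k : FreeGroup α} (H₁ : NoCancel g h) (H₂ : NoCancel h k)
    (hh : h ≠ 1) : NoCancel g (h * k) := by
  intro a ha b hb
  rw [head?_mul_of_noCancel H₂ hh] at hb
  exact H₁ a ha b hb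

theorem NoCancel.mul_left {g h k : FreeGroup α} (H₁ : NoCancel g h) (H₂ : NoCancel h k)
    (hh : h ≠ 1) : NoCancel (g * h) k := by
  simpa using (H₂.inv.mul_right H₁.inv (inv_ne_one.2 hh)).inv

theorem cyclRed_of_noCancel {u : FreeGroup α} (H : NoCancel u u) : CyclRed u := by
  intro a ha b hb hab
  refine H (b.1, !b.2) ?_ a ha hab.symm
  rw [head?_toWord_inv, Option.mem_def.1 hb]
  rfl

theorem toWord_pow_of_noCancel {g : FreeGroup α} (H : NoCancel g g) (n : ℕ) :
    (g ^ n).toWord = (List.replicate n g.toWord).flatten := by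
  induction n with
  | zero => simp
  | succ n ih =>
    have hgn : NoCancel g (g ^ n) := by
      intro a ha b hb
      have hg : g.toWord ≠ [] := by
        rintro hg
        simp [hg] at ha
      rcases n with _ | n
      · simp at hb
      · rw [ih, List.replicate_succ, List.flatten_cons, List.head?_append_of_ne_nil _ hg] at hb
        exact H a ha b hb
    rw [pow_succ', toWord_mul_of_noCancel hgn, ih, List.replicate_succ, List.flatten_cons]

theorem head?_toWord_pow_of_noCancel {g : FreeGroup α} (H : NoCancel g g) (hg : g ≠ 1)
    {n : ℕ} (hn : n ≠ 0) : (g ^ n).toWord.head? = g.toWord.head? := by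
  obtain ⟨m, rfl⟩ := Nat.exists_eq_succ_of_ne_zero hn
  rw [toWord_pow_of_noCancel H, List.replicate_succ, List.flatten_cons,
    List.head?_append_of_ne_nil _ (mt toWord_eq_nil_iff.1 hg)]

theorem length_toWord_pow_of_noCancel {g : FreeGroup α} (H : NoCancel g g) (n : ℕ) :
    (g ^ n).toWord.length = n * g.toWord.length := by
  simp [toWord_pow_of_noCancel H]

theorem exists_toWord_inv_mul (p q : FreeGroup α) :
    ∃ S P Q, p.toWord = S ++ P ∧ q.toWord = S ++ Q ∧ (p⁻¹ * q).toWord = invRev P ++ Q := by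
  obtain ⟨S, P, Q, hp, hq, hPQ⟩ := List.exists_common_prefix p.toWord q.toWord
  have hP : (mk P).toWord = P := toWord_mk_of_infix (hp ▸ List.suffix_append S P).isInfix
  have hQ : (mk Q).toWord = Q := toWord_mk_of_infix (hq ▸ List.suffix_append S Q).isInfix
  have hpq : p⁻¹ * q = (mk P)⁻¹ * mk Q := by
    rw [← mk_toWord (x := p), ← mk_toWord (x := q), hp, hq, ← mul_mk, ← mul_mk]
    group
  have H : NoCancel (mk P)⁻¹ (mk Q) := by
    rw [NoCancel, inv_inv, hP, hQ]
    exact hPQ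
  refine ⟨S, P, Q, hp, hq, ?_⟩
  rw [hpq, toWord_mul_of_noCancel H, toWord_inv, hP, hQ]

theorem not_commute_of_of_ne {j k : α} (h : j ≠ k) : ¬Commute (of j) (of k) := by
  intro hc
  have H : ∀ i l : α, i ≠ l → NoCancel (of i) (of l) := by
    intro i l hil
    simp [NoCancel, invRev, hil]
  have := congrArg toWord hc.eq
  rw [toWord_mul_of_noCancel (H j k h), toWord_mul_of_noCancel (H k j h.symm)] at this
  simp [h] at this

/-- The reduced word of `g` begins with `c` and ends with `c⁻¹`. -/
def IsWrappedBy (c : α × Bool) (g : FreeGroup α) : Prop :=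
  g.toWord.head? = some c ∧ g⁻¹.toWord.head? = some c

section Descent

variable {K : Subgroup (FreeGroup α)} {c : α × Bool}

/-- Nielsen descent on the total length of the pair. -/
theorem commute_of_head?_eq_of_head?_inv_ne {p q : FreeGroup α}
    (hK : ∀ k ∈ K, k ≠ 1 → k.toWord.head? = some c ∨ k⁻¹.toWord.head? = some c)
    (hp : p ∈ K) (hq : q ∈ K)
    (hp₁ : p.toWord.head? = some c) (hp₂ : p⁻¹.toWord.head? ≠ some c)
    (hq₁ : q.toWord.head? = some c) (hq₂ : q⁻¹.toWord.head? ≠ some c) : Commute p q := by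
  by_contra hpq
  induction hn : p.toWord.length + q.toWord.length using Nat.strong_induction_on
    generalizing p q with
  | _ n ih =>
  wlog hle : p.toWord.length ≤ q.toWord.length generalizing p q
  · exact this hq hp hq₁ hq₂ hp₁ hp₂ (fun h => hpq h.symm) (by omega) (by omega)
  obtain ⟨S, P, Q, hP, hQ, hPQ⟩ := exists_toWord_inv_mul p q
  have hQne : Q ≠ [] := by
    rintro rfl
    have hPnil : P = [] := by
      rw [hP, hQ] at hle
      simpa using hle
    obtain rfl : p = q := toWord_injective (by rw [hP, hQ, hPnil])
    exact hpq (Commute.refl p)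
  have hmem : p⁻¹ * q ∈ K := K.mul_mem (K.inv_mem hp) hq
  have hk : p⁻¹ * q ≠ 1 := by
    rw [ne_eq, ← toWord_eq_nil_iff, hPQ]
    simp [hQne]
  have hk₂ : (p⁻¹ * q)⁻¹.toWord.head? = q⁻¹.toWord.head? := by
    rw [head?_toWord_inv_of_eq_append hPQ hQne, head?_toWord_inv_of_eq_append hQ hQne]
  rcases eq_or_ne P [] with rfl | hPne
  · -- `p` is a prefix of `q`, so `p⁻¹ * q` is a shorter partner of `p`
    have hk₁ := (hK _ hmem hk).resolve_right (hk₂ ▸ hq₂)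
    have hS : S ≠ [] := by
      rintro rfl
      simp [hP] at hp₁
    refine ih _ ?_ hp hmem hp₁ hp₂ hk₁ (hk₂ ▸ hq₂) ?_ rfl
    · rw [← hn, hPQ, hP, hQ]
      simp [List.length_pos_iff.2 hS]
    · intro h
      exact hpq (by simpa using (Commute.refl p).mul_right h)
  · -- otherwise `p⁻¹ * q` begins like `p⁻¹` and ends like `q`
    have hk₁ : (p⁻¹ * q).toWord.head? = p⁻¹.toWord.head? := by
      rw [hPQ, List.head?_append_of_ne_nil _ (by simpa [invRev] using hPne),
        head?_toWord_inv_of_eq_append hP hPne]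
    rcases hK _ hmem hk with h | h
    · exact hp₂ (hk₁ ▸ h)
    · exact hq₂ (hk₂ ▸ h)

theorem commute_of_head?_eq_of_mem {g h : FreeGroup α}
    (hK : ∀ k ∈ K, k ≠ 1 → k.toWord.head? = some c ∨ k⁻¹.toWord.head? = some c)
    (hg : g ∈ K) (hh : h ∈ K)
    (hg₁ : g.toWord.head? = some c) (hg₂ : g⁻¹.toWord.head? ≠ some c) : Commute g h := by
  have hg1 : g ≠ 1 := by
    rintro rfl
    simp at hg₁
  have hgg : NoCancel g g := by
    rintro a ha b hb rfl
    rw [hg₁, Option.mem_some_iff] at hb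
    exact hg₂ (hb ▸ ha)
  -- a high power of `g` swallows `h`, leaving an element of `K` that still ends like `g`
  set n := h.toWord.length + 1
  obtain ⟨S, P, Q, hP, hQ, hPQ⟩ := exists_toWord_inv_mul h⁻¹ (g ^ n)
  rw [inv_inv] at hPQ
  have hQne : Q ≠ [] := by
    rintro rfl
    have hlen₁ := congrArg List.length hP
    have hlen₂ := congrArg List.length hQ
    rw [toWord_inv, invRev_length, List.length_append] at hlen₁
    rw [length_toWord_pow_of_noCancel hgg, List.append_nil] at hlen₂
    have := Nat.le_mul_of_pos_right n (List.length_pos_iff.2 (mt toWord_eq_nil_iff.1 hg1))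
    omega
  have hmem : h * g ^ n ∈ K := K.mul_mem hh (K.pow_mem hg n)
  have hk : h * g ^ n ≠ 1 := by
    rw [ne_eq, ← toWord_eq_nil_iff, hPQ]
    simp [hQne]
  have hk₂ : (h * g ^ n)⁻¹.toWord.head? = g⁻¹.toWord.head? := by
    rw [head?_toWord_inv_of_eq_append hPQ hQne, ← head?_toWord_inv_of_eq_append hQ hQne,
      ← inv_pow, head?_toWord_pow_of_noCancel hgg.inv (inv_ne_one.2 hg1) (Nat.succ_ne_zero _)]
  have hcomm := commute_of_head?_eq_of_head?_inv_ne hK hmem hg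
    ((hK _ hmem hk).resolve_right (hk₂ ▸ hg₂)) (hk₂ ▸ hg₂) hg₁ hg₂
  simpa using (hcomm.mul_left ((Commute.refl g).pow_left n).inv_left).symm

theorem commute_of_not_isWrappedBy {g h : FreeGroup α}
    (hK : ∀ k ∈ K, k ≠ 1 → k.toWord.head? = some c ∨ k⁻¹.toWord.head? = some c)
    (hg : g ∈ K) (hh : h ∈ K) (hc : ¬IsWrappedBy c g) : Commute g h := by
  rcases eq_or_ne g 1 with rfl | hg1
  · exact Commute.one_left h
  rcases hK g hg hg1 with hg₁ | hg₁
  · exact commute_of_head?_eq_of_mem hK hg hh hg₁ fun hg₂ => hc ⟨hg₁, hg₂⟩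
  · rw [← Commute.inv_left_iff]
    refine commute_of_head?_eq_of_mem hK (K.inv_mem hg) hh hg₁ ?_
    rw [inv_inv]
    exact fun hg₂ => hc ⟨hg₂, hg₁⟩

end Descent

theorem forall_isWrappedBy_or_forall_isWrappedBy {K : Subgroup (FreeGroup α)} {a b : α × Bool}
    (hab : a ≠ b)
    (hK : ∀ k ∈ K, k ≠ 1 → k.toWord.head? = some a ∨ k⁻¹.toWord.head? = some b) :
    (∀ k ∈ K, k ≠ 1 → IsWrappedBy a k) ∨ ∀ k ∈ K, k ≠ 1 → IsWrappedBy b k := by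
  have hwrap : ∀ k ∈ K, k ≠ 1 → IsWrappedBy a k ∨ IsWrappedBy b k := by
    intro k hk hk1
    have hk' := hK k⁻¹ (K.inv_mem hk) (inv_ne_one.2 hk1)
    rw [inv_inv] at hk'
    rcases hK k hk hk1 with h₁ | h₁ <;> rcases hk' with h₂ | h₂
    · exact Or.inl ⟨h₁, h₂⟩
    · exact absurd (Option.some_injective _ (h₁.symm.trans h₂)) hab
    · exact absurd (Option.some_injective _ (h₂.symm.trans h₁)) hab
    · exact Or.inr ⟨h₂, h₁⟩
  by_contra! hne
  obtain ⟨⟨g, hg, hg1, hga⟩, ⟨h, hh, hh1, hhb⟩⟩ := hne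
  have hg' : IsWrappedBy b g := (hwrap g hg hg1).resolve_left hga
  have hh' : IsWrappedBy a h := (hwrap h hh hh1).resolve_right hhb
  -- `h * g` is reduced as written, so it begins with `a` and ends with `b⁻¹`
  have H : NoCancel h g := by
    intro x hx y hy hxy
    rw [hh'.2, Option.mem_some_iff] at hx
    rw [hg'.1, Option.mem_some_iff] at hy
    exact hab (hx.trans (hxy.trans hy.symm))
  have h₁ : (h * g).toWord.head? = some a := (head?_mul_of_noCancel H hh1).trans hh'.1
  have h₂ : (h * g)⁻¹.toWord.head? = some b := by
    rw [mul_inv_rev, head?_mul_of_noCancel H.inv (inv_ne_one.2 hg1), hg'.2]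
  have hhg1 : h * g ≠ 1 := by
    intro e
    simp [e] at h₁
  rcases hwrap _ (K.mul_mem hh hg) hhg1 with hw | hw
  · exact hab (Option.some_injective _ (hw.2.symm.trans h₂))
  · exact hab (Option.some_injective _ (h₁.symm.trans hw.1))

def Unwrapped (K : Subgroup (FreeGroup α)) : Prop :=
  ∀ c, ∃ g ∈ K, ∃ h ∈ K, ¬Commute g h ∧ ¬IsWrappedBy c g

theorem Unwrapped.exists_mem_head?_ne {K : Subgroup (FreeGroup α)} (hK : Unwrapped K)
    (a b : α × Bool) :
    ∃ k ∈ K, k ≠ 1 ∧ k.toWord.head? ≠ some a ∧ k⁻¹.toWord.head? ≠ some b := by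
  by_contra! hbad
  replace hbad : ∀ k ∈ K, k ≠ 1 → k.toWord.head? = some a ∨ k⁻¹.toWord.head? = some b :=
    fun k hk hk1 => or_iff_not_imp_left.2 (hbad k hk hk1)
  obtain ⟨g, hg, h, hh, hgh, hga⟩ := hK a
  rcases eq_or_ne a b with rfl | hab
  · exact hgh (commute_of_not_isWrappedBy hbad hg hh hga)
  obtain ⟨g', hg', h', hh', hgh', hgb⟩ := hK b
  rcases forall_isWrappedBy_or_forall_isWrappedBy hab hbad with hA | hB
  · exact hga (hA g hg fun e => hgh (e ▸ Commute.one_left h))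
  · exact hgb (hB g' hg' fun e => hgh' (e ▸ Commute.one_left h'))

theorem Unwrapped.exists_mem_noCancel {K : Subgroup (FreeGroup α)} (hK : Unwrapped K)
    {g h : FreeGroup α} (hg : g ≠ 1) (hh : h ≠ 1) :
    ∃ k ∈ K, k ≠ 1 ∧ NoCancel g k ∧ NoCancel k h := by
  have hg' : g⁻¹.toWord ≠ [] := mt toWord_eq_nil_iff.1 (inv_ne_one.2 hg)
  have hh' : h.toWord ≠ [] := mt toWord_eq_nil_iff.1 hh
  obtain ⟨k, hk, hk1, hka, hkb⟩ :=
    hK.exists_mem_head?_ne (g⁻¹.toWord.head hg') (h.toWord.head hh')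
  refine ⟨k, hk, hk1, fun x hx y hy hxy => hka ?_, fun x hx y hy hxy => hkb ?_⟩
  · rw [List.head?_eq_some_head hg', Option.mem_some_iff] at hx
    rw [hx, hxy]
    exact hy
  · rw [List.head?_eq_some_head hh', Option.mem_some_iff] at hy
    rw [hy, ← hxy]
    exact hx

/-- `⟨α ∖ {x}⟩`, as the elements whose reduced word avoids `x`. -/
def avoiding (x : α) : Subgroup (FreeGroup α) where
  carrier := {g | ∀ p ∈ g.toWord, p.1 ≠ x}
  one_mem' := by simp
  mul_mem' hg hh p hp :=
    (List.mem_append.1 ((toWord_mul_sublist _ _).subset hp)).elim (hg p) (hh p)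
  inv_mem' hg p hp := by
    rw [toWord_inv, invRev, List.mem_reverse, List.mem_map] at hp
    obtain ⟨q, hq, rfl⟩ := hp
    exact hg q hq

theorem mk_mem_avoiding {x : α} {L : List (α × Bool)} (hL : ∀ p ∈ L, p.1 ≠ x) :
    mk L ∈ avoiding x := fun p hp =>
  hL p (reduce.red.sublist.subset (toWord_mk (L₁ := L) ▸ hp))

theorem of_mem_avoiding {x j : α} (h : j ≠ x) : of j ∈ avoiding x := by
  intro p hp
  rw [toWord_of, List.mem_singleton] at hp
  exact hp ▸ h

theorem lift_apply_of_mem_avoiding {x : α} {f : α → FreeGroup α}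
    (hf : ∀ t, t ≠ x → f t = of t) {g : FreeGroup α} (hg : g ∈ avoiding x) : lift f g = g := by
  rw [← mk_toWord (x := g)]
  calc lift f (mk g.toWord) = lift of (mk g.toWord) := by
        rw [lift_mk, lift_mk]
        congr 1
        exact List.map_congr_left fun p hp => by rw [hf p.1 (hg p hp)]
    _ = mk g.toWord := by rw [lift_of_eq_id]; rfl

theorem IsPrimitive.map {u : FreeGroup α} (hu : IsPrimitive u) (ψ : FreeGroup α ≃* FreeGroup α) :
    IsPrimitive (ψ u) := by
  obtain ⟨φ, i, rfl⟩ := hu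
  exact ⟨φ.trans ψ, i, rfl⟩

theorem IsPrimitive.inv {u : FreeGroup α} (hu : IsPrimitive u) : IsPrimitive u⁻¹ := by
  obtain ⟨ψ, i, rfl⟩ := hu
  let σ : FreeGroup α →* FreeGroup α := lift fun t => if t = i then (of t)⁻¹ else of t
  have hσ : σ.comp σ = MonoidHom.id _ := by
    ext t
    by_cases ht : t = i <;> simp [σ, ht]
  exact ⟨(MonoidHom.toMulEquiv σ σ hσ hσ).trans ψ, i, by simp [σ]⟩

/-- The Nielsen transvection `x ↦ C * x * D`, fixing the other generators, is an automorphism. -/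
theorem isPrimitive_mul_of_mul {x : α} {C D : FreeGroup α} (hC : C ∈ avoiding x)
    (hD : D ∈ avoiding x) : IsPrimitive (C * of x * D) := by
  let τ : FreeGroup α →* FreeGroup α := lift fun t => if t = x then C * of t * D else of t
  let τ' : FreeGroup α →* FreeGroup α := lift fun t => if t = x then C⁻¹ * of t * D⁻¹ else of t
  have hfix : ∀ {y : α → FreeGroup α}, (∀ t, t ≠ x → (if t = x then y t else of t) = of t) :=
    fun t ht => if_neg ht
  have hτ : ∀ g ∈ avoiding x, τ g = g := fun g hg => lift_apply_of_mem_avoiding hfix hg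
  have hτ' : ∀ g ∈ avoiding x, τ' g = g := fun g hg => lift_apply_of_mem_avoiding hfix hg
  refine ⟨MonoidHom.toMulEquiv τ τ' ?_ ?_, x, show τ (of x) = _ by simp [τ]⟩ <;> ext t <;>
    by_cases ht : t = x
  · simp [τ, τ', ht, hτ' C hC, hτ' D hD]
    group
  · simp [τ, τ', ht]
  · simp [τ, τ', ht, hτ C⁻¹ (inv_mem hC), hτ D⁻¹ (inv_mem hD)]
    group
  · simp [τ, τ', ht]

theorem isPrimitive_mul_mk_mul {x : α} {C D : FreeGroup α} (hC : C ∈ avoiding x)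
    (hD : D ∈ avoiding x) (ε : Bool) : IsPrimitive (C * mk [(x, ε)] * D) := by
  cases ε
  · have h : C * mk [(x, false)] * D = (D⁻¹ * of x * C⁻¹)⁻¹ := by
      rw [show mk [(x, false)] = (of x)⁻¹ from rfl]
      group
    rw [h]
    exact (isPrimitive_mul_of_mul (inv_mem hD) (inv_mem hC)).inv
  · exact isPrimitive_mul_of_mul hC hD

theorem exists_isPrimitive_cyclRed_prefix_of_eq_mul (φ : FreeGroup α ≃* FreeGroup α) {x : α}
    (hK : Unwrapped ((avoiding x).map φ.toMonoidHom)) {C D : FreeGroup α}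
    (hC : C ∈ avoiding x) (hD : D ∈ avoiding x) (ε : Bool)
    (hw : φ (C * mk [(x, ε)] * D) ≠ 1) :
    ∃ u, IsPrimitive u ∧ CyclRed u ∧ (φ (C * mk [(x, ε)] * D)).toWord <+: u.toWord := by
  obtain ⟨_, ⟨E, hE, rfl⟩, hE1, H₁, H₂⟩ := hK.exists_mem_noCancel hw hw
  rw [MulEquiv.coe_toMonoidHom] at hE1 H₁ H₂
  refine ⟨φ (C * mk [(x, ε)] * D * E), ?_, ?_, ?_⟩
  · rw [show C * mk [(x, ε)] * D * E = C * mk [(x, ε)] * (D * E) by group]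
    exact (isPrimitive_mul_mk_mul hC (mul_mem hD hE) ε).map φ
  · rw [_root_.map_mul φ _ E]
    exact cyclRed_of_noCancel (H₁.mul_left (H₂.mul_right H₁ hw) hE1)
  · rw [_root_.map_mul φ _ E, toWord_mul_of_noCancel H₁]
    exact List.prefix_append _ _

theorem exists_isPrimitive_cyclRed_prefix (φ : FreeGroup α ≃* FreeGroup α) {x : α}
    (hK : Unwrapped ((avoiding x).map φ.toMonoidHom)) {w : FreeGroup α}
    (hw : (w.toWord.countP fun p => decide (p.1 = x)) ≤ 1) :
    ∃ u, IsPrimitive u ∧ CyclRed u ∧ (φ w).toWord <+: u.toWord := by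
  by_cases hw1 : φ w = 1
  · refine ⟨of x, ⟨MulEquiv.refl _, x, rfl⟩, by simp [CyclRed], ?_⟩
    rw [hw1, toWord_one]
    exact List.nil_prefix
  obtain hfree | ⟨L₁, ⟨y, ε⟩, L₂, hsplit, hy, hL₁, hL₂⟩ :=
    List.forall_or_exists_split_of_countP_le_one hw
  · -- `w` avoids `x`: pass to `w * E * x`, in which `x` occurs once
    have hX : φ (of x) ≠ 1 := (map_ne_one_iff φ φ.injective).2 (of_ne_one x)
    obtain ⟨_, ⟨E, hE, rfl⟩, hE1, H₁, H₂⟩ := hK.exists_mem_noCancel hw1 hX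
    rw [MulEquiv.coe_toMonoidHom] at hE1 H₁ H₂
    have hpre : (φ w).toWord <+: (φ (w * E * mk [(x, true)] * 1)).toWord := by
      rw [mul_one, _root_.map_mul, _root_.map_mul, show mk [(x, true)] = of x from rfl,
        toWord_mul_of_noCancel (H₁.mul_left H₂ hE1), toWord_mul_of_noCancel H₁,
        List.append_assoc]
      exact List.prefix_append _ _
    have hw' : φ (w * E * mk [(x, true)] * 1) ≠ 1 := fun h =>
      hw1 (toWord_eq_nil_iff.1 (List.prefix_nil.1 (by rwa [h, toWord_one] at hpre)))
    obtain ⟨u, hu, hcr, hu'⟩ := exists_isPrimitive_cyclRed_prefix_of_eq_mul φ hK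
      (mul_mem (fun p hp => by simpa using hfree p hp) hE) (one_mem _) true hw'
    exact ⟨u, hu, hcr, hpre.trans hu'⟩
  · simp only [decide_eq_true_eq] at hy hL₁ hL₂
    subst hy
    have hw' : w = mk L₁ * mk [(y, ε)] * mk L₂ := by
      rw [mul_mk, mul_mk, List.append_assoc, List.singleton_append, ← hsplit, mk_toWord]
    subst hw'
    exact exists_isPrimitive_cyclRed_prefix_of_eq_mul φ hK (mk_mem_avoiding hL₁)
      (mk_mem_avoiding hL₂) ε hw1

theorem length_toWord_conj_le (u g : FreeGroup α) :
    (g⁻¹ * u * g).toWord.length ≤ u.toWord.length + 2 * g.toWord.length := by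
  have := (norm_mul_le (g⁻¹ * u) g).trans (Nat.add_le_add_right (norm_mul_le g⁻¹ u) _)
  rw [norm_inv_eq] at this
  unfold FreeGroup.norm at this
  omega

theorem length_toWord_conj_add_two {c : α × Bool} {u : FreeGroup α} (hu : IsWrappedBy c u) :
    ((mk [c])⁻¹ * u * mk [c]).toWord.length + 2 = u.toWord.length := by
  have hT := List.eq_cons_of_mem_head? hu.1
  have h₂ := hu.2
  rw [head?_toWord_inv, hT] at h₂
  rcases List.eq_nil_or_concat u.toWord.tail with hnil | ⟨L, d, hLd⟩
  · rw [hnil] at h₂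
    simp [Prod.ext_iff] at h₂
  rw [hLd, List.concat_eq_append] at hT h₂
  have hd : d = (c.1, !c.2) := by
    rw [← List.cons_append, List.getLast?_concat, Option.map_some, Option.some_inj] at h₂
    rw [← h₂, Bool.not_not]
  have hu' : u = mk [c] * mk L * (mk [c])⁻¹ := by
    rw [← mk_toWord (x := u), hT, inv_mk, mul_mk, mul_mk, hd]
    rfl
  have hL : (mk L).toWord = L := toWord_mk_of_infix ⟨[c], [d], by rw [hT]; rfl⟩
  have hconj : (mk [c])⁻¹ * u * mk [c] = mk L := by
    rw [hu']
    group
  rw [hconj, hL, hT]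
  simp

variable [Fintype α]

theorem exists_ne_not_isWrappedBy (hα : 3 ≤ Fintype.card α) (φ : FreeGroup α ≃* FreeGroup α)
    (hmin : ∀ g : FreeGroup α, (∑ i, len (φ (of i))) ≤ ∑ i, len (g⁻¹ * φ (of i) * g))
    (x : α) (c : α × Bool) : ∃ j, j ≠ x ∧ ¬IsWrappedBy c (φ (of j)) := by
  by_contra! hall
  -- conjugating by `c` shortens each `φ (of j)` with `j ≠ x` by two and lengthens `φ (of x)` by
  -- at most two
  have hconj : ∀ i, len ((mk [c])⁻¹ * φ (of i) * mk [c]) + 2 ≤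
      len (φ (of i)) + if i = x then 4 else 0 := by
    intro i
    by_cases hi : i = x
    · have := length_toWord_conj_le (φ (of i)) (mk [c])
      rw [toWord_mk, IsReduced.singleton.reduce_eq, List.length_singleton] at this
      simp only [len, if_pos hi]
      omega
    · simp only [len, if_neg hi]
      exact (length_toWord_conj_add_two (hall i hi)).le
  have hsum := Finset.sum_le_sum fun i (_ : i ∈ Finset.univ) => hconj i
  rw [Finset.sum_add_distrib, Finset.sum_add_distrib, Finset.sum_ite_eq'] at hsum
  simp only [Finset.sum_const, Finset.card_univ, smul_eq_mul, Finset.mem_univ, if_true] at hsum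
  have := hmin (mk [c])
  omega

theorem unwrapped_map_avoiding (hα : 3 ≤ Fintype.card α) (φ : FreeGroup α ≃* FreeGroup α)
    (hmin : ∀ g : FreeGroup α, (∑ i, len (φ (of i))) ≤ ∑ i, len (g⁻¹ * φ (of i) * g))
    (x : α) : Unwrapped ((avoiding x).map φ.toMonoidHom) := by
  intro c
  obtain ⟨j, hjx, hj⟩ := exists_ne_not_isWrappedBy hα φ hmin x c
  obtain ⟨k, -, hk⟩ := Finset.exists_mem_notMem_of_card_lt_card
    (s := {x, j}) (t := Finset.univ) (Finset.card_le_two.trans_lt (by simp; omega))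
  rw [Finset.mem_insert, Finset.mem_singleton, not_or] at hk
  refine ⟨φ (of j), Subgroup.mem_map_of_mem _ (of_mem_avoiding hjx),
    φ (of k), Subgroup.mem_map_of_mem _ (of_mem_avoiding hk.1), fun hc => ?_, hj⟩
  exact not_commute_of_of_ne (Ne.symm hk.2) (by simpa using hc.map φ.symm)

end FreeGroup

/-- the image of a slender word under a conjugacy-length-minimal
automorphism contains no primitivity-blocking subword. -/
theorem stmt17 (r : ℕ) (hr : 3 ≤ r) (φ : F r ≃* F r)
    (hmin : ∀ g : F r, (∑ i, len (φ (FreeGroup.of i))) ≤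
      ∑ i, len (g⁻¹ * φ (FreeGroup.of i) * g))
    (w : F r) (hs : Slender w) :
    ∀ v : F r, PrimitivityBlocking v → ¬ Subword v (φ w) := by
  intro v hv hsub
  obtain ⟨x, hx⟩ := hs
  have hK := unwrapped_map_avoiding (by simpa using hr) φ hmin x
  obtain ⟨u, hu, hcr, hpre⟩ := exists_isPrimitive_cyclRed_prefix φ hK hx
  exact hv u hu hcr (hsub.trans hpre.isInfix)
end
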